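/- arXiv:1708.01305 — 7 statements merged into one kernel-verified Lean document; each statement's English description precedes it below -/
import Mathlib

section
/- Let n ≥ 2 be an integer and let X_n be the unitary Cayley graph of ℤ/nℤ (vertices are elements of ℤ/nℤ, with x adjacent to y iff x - y is a unit). Then the set {0, 1, ..., g(n) - 1} is a total dominating set of X_n, where g(n) is the smallest positive integer m such that every set of m consecutive integers contains an element coprime to n. In particular, the total domination number of X_n is at most g(n). -/
/-- `D` is a dominating set of `G`. -/
def IsDomSet {V : Type*} (G : SimpleGraph V) (D : Set V) : Prop :=
  ∀ v, v ∈ D ∨ ∃ d ∈ D, G.Adj v d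

/-- `D` is a total dominating set of `G`. -/
def IsTotalDomSet {V : Type*} (G : SimpleGraph V) (D : Set V) : Prop :=
  ∀ v, ∃ d ∈ D, G.Adj v d

/-- `D` is a minimal dominating set of `G`. -/
def IsMinimalDomSet {V : Type*} (G : SimpleGraph V) (D : Set V) : Prop :=
  IsDomSet G D ∧ ∀ D' ⊂ D, ¬ IsDomSet G D'

/-- The domination number of `G`. -/
noncomputable def domNum {V : Type*} (G : SimpleGraph V) : ℕ :=
  sInf {k | ∃ D : Set V, IsDomSet G D ∧ D.ncard = k}

/-- The total domination number of `G`. -/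
noncomputable def totalDomNum {V : Type*} (G : SimpleGraph V) : ℕ :=
  sInf {k | ∃ D : Set V, IsTotalDomSet G D ∧ D.ncard = k}

/-- The upper domination number of `G`. -/
noncomputable def upperDomNum {V : Type*} (G : SimpleGraph V) : ℕ :=
  sSup {k | ∃ D : Set V, IsMinimalDomSet G D ∧ D.ncard = k}

/-- Jacobsthal's function. -/
noncomputable def jacobsthal (n : ℕ) : ℕ :=
  sInf {m | 0 < m ∧ ∀ x : ℤ, ∃ i : ℕ, i < m ∧ Int.gcd (x + i) n = 1}

/-- The unitary Cayley graph of `ℤ/nℤ`. -/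
def unitaryCayley (n : ℕ) : SimpleGraph (ZMod n) where
  Adj x y := x ≠ y ∧ IsUnit (x - y)
  symm := ⟨by
    rintro x y ⟨h1, h2⟩
    exact ⟨h1.symm, by simpa [neg_sub] using h2.neg⟩⟩
  loopless := ⟨by rintro x ⟨h, _⟩; exact h rfl⟩

/-- The direct product of complete graphs `K_{n 0} × ⋯ × K_{n (t-1)}`. -/
def completeProd (t : ℕ) (n : Fin t → ℕ) : SimpleGraph (∀ i, ZMod (n i)) where
  Adj x y := x ≠ y ∧ ∀ i, x i ≠ y i
  symm := ⟨by rintro x y ⟨h1, h2⟩; exact ⟨h1.symm, fun i => (h2 i).symm⟩⟩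
  loopless := ⟨by rintro x ⟨h, _⟩; exact h rfl⟩

/-- The direct product of balanced complete multipartite graphs
`K[a 0, b 0] × ⋯ × K[a (t-1), b (t-1)]`, where `K[a,b]` has vertex set `ZMod (a*b)`
with `x ~ y` iff `x ≢ y (mod b)`. -/
def multipartiteProd (t : ℕ) (a b : Fin t → ℕ) :
    SimpleGraph (∀ i, ZMod (a i * b i)) where
  Adj x y := x ≠ y ∧ ∀ i, (x i).val % b i ≠ (y i).val % b i
  symm := ⟨by rintro x y ⟨h1, h2⟩; exact ⟨h1.symm, fun i => (h2 i).symm⟩⟩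
  loopless := ⟨by rintro x ⟨h, _⟩; exact h rfl⟩

/-- The direct (tensor) product of two graphs. -/
def directProd {V W : Type*} (G : SimpleGraph V) (H : SimpleGraph W) :
    SimpleGraph (V × W) where
  Adj x y := G.Adj x.1 y.1 ∧ H.Adj x.2 y.2
  symm := ⟨by rintro x y ⟨h1, h2⟩; exact ⟨h1.symm, h2.symm⟩⟩
  loopless := ⟨by rintro x ⟨h, _⟩; exact G.loopless.irrefl _ h⟩

lemma isUnit_intCast_of_gcd_eq_one {n : ℕ} {a : ℤ} (h : Int.gcd a n = 1) :
    IsUnit (a : ZMod n) := by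
  have := (Int.isCoprime_iff_gcd_eq_one.mpr h).map (Int.castRingHom (ZMod n))
  simpa [isCoprime_zero_right] using this

lemma unitaryCayley_adj_iff {n : ℕ} [Fact (1 < n)] {x y : ZMod n} :
    (unitaryCayley n).Adj x y ↔ IsUnit (x - y) :=
  ⟨And.right, fun h => ⟨sub_ne_zero.mp h.ne_zero, h⟩⟩

lemma totalDomNum_le_ncard {V : Type*} {G : SimpleGraph V} {D : Set V}
    (hD : IsTotalDomSet G D) : totalDomNum G ≤ D.ncard :=
  Nat.sInf_le ⟨D, hD, rfl⟩

lemma ncard_setOf_natCast_lt_le {R : Type*} [NatCast R] (m : ℕ) :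
    {x : R | ∃ i : ℕ, i < m ∧ x = i}.ncard ≤ m := by
  have : {x : R | ∃ i : ℕ, i < m ∧ x = i} = Nat.cast '' Set.Iio m := by
    ext x
    simp [eq_comm]
  rw [this]
  exact (Set.ncard_image_le (Set.finite_Iio m)).trans (Set.ncard_Iio_nat m).le

-- The defining set is nonempty: among any `n` consecutive integers one is `≡ 1 (mod n)`.
lemma jacobsthal_mem {n : ℕ} (hn : 0 < n) :
    jacobsthal n ∈ {m | 0 < m ∧ ∀ x : ℤ, ∃ i : ℕ, i < m ∧ Int.gcd (x + i) n = 1} := by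
  refine Nat.sInf_mem ⟨n, hn, fun x => ?_⟩
  have hn' : (0 : ℤ) < n := by exact_mod_cast hn
  have := Int.emod_lt_of_pos (1 - x) hn'
  refine ⟨((1 - x) % n).toNat, by omega, ?_⟩
  rw [Int.toNat_of_nonneg (Int.emod_nonneg _ hn'.ne'), ← Int.isCoprime_iff_gcd_eq_one]
  refine ⟨1, (1 - x) / n, ?_⟩
  rw [Int.emod_def]
  ring

lemma exists_lt_jacobsthal_isUnit_sub {n : ℕ} (hn : 0 < n) (v : ZMod n) :
    ∃ i : ℕ, i < jacobsthal n ∧ IsUnit ((i : ZMod n) - v) := by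
  obtain ⟨i, hi, hgcd⟩ := (jacobsthal_mem hn).2 (-(v.cast : ℤ))
  refine ⟨i, hi, ?_⟩
  simpa [ZMod.intCast_zmod_cast, neg_add_eq_sub] using isUnit_intCast_of_gcd_eq_one hgcd

theorem stmt0 (n : ℕ) (hn : 2 ≤ n) :
    IsTotalDomSet (unitaryCayley n)
      {x : ZMod n | ∃ i : ℕ, i < jacobsthal n ∧ x = (i : ZMod n)} ∧
    totalDomNum (unitaryCayley n) ≤ jacobsthal n := by
  have : Fact (1 < n) := ⟨hn⟩
  have hD : IsTotalDomSet (unitaryCayley n)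
      {x : ZMod n | ∃ i : ℕ, i < jacobsthal n ∧ x = (i : ZMod n)} := by
    intro v
    obtain ⟨i, hi, hunit⟩ := exists_lt_jacobsthal_isUnit_sub (by omega) v
    exact ⟨i, ⟨i, hi, rfl⟩, unitaryCayley_adj_iff.mpr (by simpa using hunit.neg)⟩
  exact ⟨hD, (totalDomNum_le_ncard hD).trans (ncard_setOf_natCast_lt_le _)⟩
end

section
/- For any positive integers a₁,...,a_t and b₁,...,b_t, the domination number of the direct product of the balanced complete multipartite graphs K[a₁,b₁], ..., K[a_t,b_t] is at least the domination number of the direct product of the complete graphs K_{b₁}, ..., K_{b_t}. -/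
/-!
Reducing every coordinate modulo `b i` is a surjective graph homomorphism
`K[a₁,b₁] × ⋯ × K[a_t,b_t] → K_{b₁} × ⋯ × K_{b_t}`, and a surjective homomorphism maps
dominating sets onto dominating sets without increasing their size.
-/

namespace IsDomSet

variable {V W : Type*} {G : SimpleGraph V} {H : SimpleGraph W}

theorem image_of_surjective {D : Set V} (hD : IsDomSet G D) (f : G →g H)
    (hf : Function.Surjective f) : IsDomSet H (f '' D) := by
  intro w
  obtain ⟨v, rfl⟩ := hf w
  rcases hD v with hv | ⟨d, hd, hadj⟩
  · exact Or.inl (Set.mem_image_of_mem f hv)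
  · exact Or.inr ⟨f d, Set.mem_image_of_mem f hd, f.map_adj hadj⟩

end IsDomSet

theorem domNum_le_ncard {V : Type*} {G : SimpleGraph V} {D : Set V} (hD : IsDomSet G D) :
    domNum G ≤ D.ncard :=
  Nat.sInf_le ⟨D, hD, rfl⟩

theorem domNum_le_of_surjective {V W : Type*} [Finite V] {G : SimpleGraph V}
    {H : SimpleGraph W} (f : G →g H) (hf : Function.Surjective f) : domNum H ≤ domNum G := by
  refine le_csInf ⟨(Set.univ : Set V).ncard, Set.univ, fun v => Or.inl (Set.mem_univ v), rfl⟩ ?_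
  rintro _ ⟨D, hD, rfl⟩
  calc domNum H ≤ (f '' D).ncard := domNum_le_ncard (hD.image_of_surjective f hf)
    _ ≤ D.ncard := Set.ncard_image_le D.toFinite

def multipartiteProdToCompleteProd (t : ℕ) (a b : Fin t → ℕ) :
    multipartiteProd t a b →g completeProd t b where
  toFun x i := ((x i).val : ZMod (b i))
  map_rel' {x y} hxy := by
    have hne : ∀ i, ((x i).val : ZMod (b i)) ≠ (y i).val := fun i h =>
      hxy.2 i ((ZMod.natCast_eq_natCast_iff' _ _ _).mp h)
    obtain ⟨i, -⟩ := Function.ne_iff.mp hxy.1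
    exact ⟨fun h => hne i (congrFun h i), hne⟩

theorem multipartiteProdToCompleteProd_surjective (t : ℕ) (a b : Fin t → ℕ)
    (hb : ∀ i, 0 < b i) : Function.Surjective (multipartiteProdToCompleteProd t a b) := by
  intro v
  refine ⟨fun i => ((v i).val : ZMod (a i * b i)), funext fun i => ?_⟩
  have : NeZero (b i) := ⟨(hb i).ne'⟩
  change (((v i).val : ZMod (a i * b i)).val : ZMod (b i)) = v i
  rw [ZMod.val_natCast, (ZMod.natCast_eq_natCast_iff' _ _ _).mpr
    (Nat.mod_mod_of_dvd _ (dvd_mul_left _ _)), ZMod.natCast_zmod_val]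

theorem stmt1 (t : ℕ) (a b : Fin t → ℕ) (ha : ∀ i, 0 < a i) (hb : ∀ i, 0 < b i) :
    domNum (completeProd t b) ≤ domNum (multipartiteProd t a b) := by
  have : ∀ i, NeZero (a i * b i) := fun i => ⟨(Nat.mul_pos (ha i) (hb i)).ne'⟩
  exact domNum_le_of_surjective _ (multipartiteProdToCompleteProd_surjective t a b hb)
end

section
/- Let G = K_{n₁} × K_{n₂} × ⋯ × K_{n_t} (direct product) with 2 ≤ n₁ ≤ n₂ ≤ ⋯ ≤ n_t, t ≥ 4, and n₂ ≥ 3. Then γ(G) ≥ t + 1 + ⌊(t-1)/(n₁-1)⌋. -/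
/-!
Let `D` be a dominating set, `c` a value of the first coordinate whose fiber `F ⊆ D` is largest,
and `R := D \ F`. A vertex with first coordinate `c` that agrees with every vertex of `R` in some
other coordinate is adjacent to no vertex of `D`, so it lies in `F`. If `|R| ≤ t - 1`, counting
such vertices (all other factors have at least 3 vertices) gives `|F| + |R| ≥ 2t`: one changes one
coordinate at a time of a vertex meeting each row of `R` in its own coordinate, or, when `|R|`
equals the number of free coordinates, permutes that assignment or merges two rows that agree
somewhere. If `|R| ≥ t`, then `t ≤ |R| ≤ (n₁ - 1)|F|` forces `|F| > ⌊(t - 1)/(n₁ - 1)⌋`.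
-/

open Finset

theorem Finset.exists_surjOn_of_card_le {α β : Type*} [Nonempty β] {s : Finset α} {t : Finset β}
    (h : #t ≤ #s) : ∃ f : α → β, Set.SurjOn f s t := by
  classical
  obtain ⟨u, hus, hu⟩ := exists_subset_card_eq h
  let e := Finset.equivOfCardEq hu
  refine ⟨fun a => if ha : a ∈ u then e ⟨a, ha⟩ else Classical.arbitrary β, fun b hb => ?_⟩
  refine ⟨e.symm ⟨b, hb⟩, hus (e.symm ⟨b, hb⟩).2, ?_⟩
  simp

theorem Finset.exists_card_le_mul_card_fiber {α β : Type*} [Fintype β] [Nonempty β]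
    [DecidableEq β] (s : Finset α) (f : α → β) :
    ∃ b, #s ≤ Fintype.card β * #{a ∈ s | f a = b} := by
  obtain ⟨b, -, hb⟩ := exists_max_image univ (fun b => #{a ∈ s | f a = b}) univ_nonempty
  refine ⟨b, ?_⟩
  rw [mul_comm, ← card_univ]
  exact card_le_mul_card_image_of_maps_to (fun _ _ => mem_univ _) _ fun b' _ => hb b' (mem_univ _)

theorem le_domNum {V : Type*} [Fintype V] (G : SimpleGraph V) {k : ℕ}
    (h : ∀ D : Finset V, IsDomSet G D → k ≤ #D) : k ≤ domNum G := by
  classical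
  refine le_csInf ⟨_, Set.univ, fun v => Or.inl trivial, rfl⟩ ?_
  rintro _ ⟨D, hD, rfl⟩
  rw [Set.ncard_eq_toFinset_card']
  exact h _ (by simpa using hD)

section Hitters

variable {ι : Type*} [Fintype ι] [DecidableEq ι] {α : ι → Type*} [∀ i, Fintype (α i)]
  [∀ i, DecidableEq (α i)]

/-- The points of the `C`-slice through `z` that agree with every point of `R` in some
coordinate of `C`: in the direct product of complete graphs, those not dominated by `R`. -/
def hitters (C : Finset ι) (z : ∀ i, α i) (R : Finset (∀ i, α i)) : Finset (∀ i, α i) :=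
  {v | (∀ i ∉ C, v i = z i) ∧ ∀ d ∈ R, ∃ i ∈ C, v i = d i}

variable {C : Finset ι} {z : ∀ i, α i} {R : Finset (∀ i, α i)}

theorem mem_hitters {v : ∀ i, α i} :
    v ∈ hitters C z R ↔ (∀ i ∉ C, v i = z i) ∧ ∀ d ∈ R, ∃ i ∈ C, v i = d i := by
  simp [hitters]

/-- Starting from the point `u` that meets each row `row j` at coordinate `j ∈ S`, every change of a
single coordinate of `C` stays in `hitters C z R`, provided that when the changed coordinate `j`
lies in `S` the spare coordinate `p` takes over the agreement with `row j`. -/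
theorem sum_card_sub_one_add_one_le_card_hitters {S : Finset ι} {p : ι} {row : ι → ∀ i, α i}
    (hSC : S ⊆ C) (hp : p ∈ C) (hpS : p ∉ S) (hrow : Set.SurjOn row S R) :
    ∑ i ∈ C, (Fintype.card (α i) - 1) + 1 ≤ #(hitters C z R) := by
  let u : ∀ i, α i := fun i => if i ∈ S then row i i else z i
  let w : (Σ i, α i) → ∀ i, α i := fun x =>
    Function.update (if x.1 ∈ S then Function.update u p (row x.1 p) else u) x.1 x.2
  have hw_self (x : Σ i, α i) : w x x.1 = x.2 := Function.update_self ..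
  have hw_ne (x : Σ i, α i) {j : ι} (hjx : j ≠ x.1) (hjp : j ≠ p) : w x j = u j := by
    simp only [w, Function.update_of_ne hjx]
    split_ifs <;> simp [Function.update_of_ne hjp]
  have hw_p (x : Σ i, α i) (hx : x.1 ∈ S) : w x p = row x.1 p := by
    have hpx : p ≠ x.1 := fun h => hpS (h ▸ hx)
    simp [w, Function.update_of_ne hpx, hx]
  have hu_off {j : ι} (hj : j ∉ C) : u j = z j := if_neg fun h => hj (hSC h)
  have hu_row {j : ι} (hj : j ∈ S) : u j = row j j := if_pos hj
  let P := C.sigma fun i => univ.erase (u i)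
  have hP {x : Σ i, α i} (hx : x ∈ P) : x.1 ∈ C ∧ x.2 ≠ u x.1 := by simpa [P] using hx
  have hu_mem : u ∈ hitters C z R := by
    refine mem_hitters.2 ⟨fun j hj => hu_off hj, fun d hd => ?_⟩
    obtain ⟨j, hj, rfl⟩ := hrow hd
    exact ⟨j, hSC hj, hu_row hj⟩
  have hw_mem (x : Σ i, α i) (hx : x ∈ P) : w x ∈ hitters C z R := by
    have hxC := (hP hx).1
    refine mem_hitters.2 ⟨fun j hj => ?_, fun d hd => ?_⟩
    · rw [hw_ne x (ne_of_mem_of_not_mem hxC hj).symm (ne_of_mem_of_not_mem hp hj).symm,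
        hu_off hj]
    obtain ⟨j, hj, rfl⟩ := hrow hd
    by_cases hjx : j = x.1
    · subst hjx
      exact ⟨p, hp, hw_p x hj⟩
    · exact ⟨j, hSC hj, by rw [hw_ne x hjx (fun h => hpS (h ▸ hj)), hu_row hj]⟩
  -- A point `w x` differs from `u` at `x.1` and at most at `p` besides, so it determines `x`.
  have hw_inj : Set.InjOn w P := by
    rintro ⟨i, a⟩ hx ⟨j, b⟩ hy hxy
    have hdiff_x := (hP hx).2
    have hdiff_y := (hP hy).2
    by_cases hij : i = j
    · subst hij
      have hab : a = b := by simpa [hw_self] using congrFun hxy i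
      rw [hab]
    · have hip : i = p := by
        by_contra hip
        exact hdiff_x (by simpa [hw_self, hw_ne ⟨j, b⟩ hij hip] using congrFun hxy i)
      have hjp : j = p := by
        by_contra hjp
        exact hdiff_y
          (by simpa [hw_self, hw_ne ⟨i, a⟩ (Ne.symm hij) hjp] using (congrFun hxy j).symm)
      exact absurd (hip.trans hjp.symm) hij
  have hu_notMem : u ∉ P.image w := by
    simp only [mem_image, not_exists, not_and]
    intro x hx hwx
    exact (hP hx).2 (by rw [← hwx, hw_self])
  calc ∑ i ∈ C, (Fintype.card (α i) - 1) + 1 = #(insert u (P.image w)) := by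
        rw [card_insert_of_notMem hu_notMem, card_image_of_injOn hw_inj, card_sigma]
        simp
    _ ≤ #(hitters C z R) :=
        card_le_card (insert_subset hu_mem (image_subset_iff.2 hw_mem))

theorem two_mul_card_add_one_le_card_hitters (hC : ∀ i ∈ C, 3 ≤ Fintype.card (α i))
    (hlt : #R < #C) : 2 * #C + 1 ≤ #(hitters C z R) := by
  have : Nonempty (∀ i, α i) := ⟨z⟩
  obtain ⟨p, hp⟩ : C.Nonempty := card_pos.1 (by omega)
  obtain ⟨row, hrow⟩ := exists_surjOn_of_card_le (s := C.erase p) (t := R)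
    (by rw [card_erase_of_mem hp]; omega)
  calc 2 * #C + 1 = ∑ _i ∈ C, 2 + 1 := by simp [mul_comm]
    _ ≤ ∑ i ∈ C, (Fintype.card (α i) - 1) + 1 := by
        gcongr with i hi
        have := hC i hi
        omega
    _ ≤ #(hitters C z R) :=
        sum_card_sub_one_add_one_le_card_hitters (erase_subset p C) hp (notMem_erase p C) hrow

theorem two_mul_card_add_two_le_card_hitters_empty (hC : ∀ i ∈ C, 3 ≤ Fintype.card (α i))
    (hC2 : 2 ≤ #C) : 2 * #C + 2 ≤ #(hitters C z ∅) := by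
  choose a ha using fun i (hi : i ∈ C) => Fintype.exists_ne_of_one_lt_card (by grind) (z i)
  let v : ∀ i, α i := fun i => if hi : i ∈ C then a i hi else z i
  have hv_mem : v ∈ hitters C z ∅ := mem_hitters.2 ⟨fun i hi => dif_neg hi, by simp⟩
  have hv_notMem : v ∉ hitters C z {z} := by
    intro hv
    obtain ⟨i, hi, hvi⟩ := (mem_hitters.1 hv).2 z (mem_singleton_self z)
    exact ha i hi (by simpa [v, hi] using hvi)
  have hsub : insert v (hitters C z {z}) ⊆ hitters C z ∅ :=
    insert_subset hv_mem fun w hw => mem_hitters.2 ⟨(mem_hitters.1 hw).1, by simp⟩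
  have := card_le_card hsub
  rw [card_insert_of_notMem hv_notMem] at this
  have := two_mul_card_add_one_le_card_hitters (z := z) (R := {z}) hC (by simp; omega)
  omega

theorem hitters_erase_subset {p : ι} (hp : p ∈ C) (c : α p) :
    hitters (C.erase p) (Function.update z p c) {d ∈ R | d p ≠ c} ⊆ hitters C z R := by
  intro v hv
  obtain ⟨hv_off, hv_row⟩ := mem_hitters.1 hv
  have hvp : v p = c := by simpa using hv_off p (notMem_erase p C)
  refine mem_hitters.2 ⟨fun i hi => ?_, fun d hd => ?_⟩
  · have hip : i ≠ p := (ne_of_mem_of_not_mem hp hi).symm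
    simpa [Function.update_of_ne hip] using hv_off i (fun h => hi (mem_of_mem_erase h))
  by_cases hdp : d p = c
  · exact ⟨p, hp, hvp.trans hdp.symm⟩
  · obtain ⟨i, hi, hvi⟩ := hv_row d (mem_filter.2 ⟨hd, hdp⟩)
    exact ⟨i, mem_of_mem_erase hi, hvi⟩

/-- When no two rows of `R` agree in a coordinate of `C`, a bijection `C ≃ R` and any permutation
`π` of `C` give the point whose `i`-th coordinate is that of the row assigned to `π i`. -/
theorem factorial_card_le_card_hitters (hRC : #R = #C)
    (hinj : ∀ i ∈ C, Set.InjOn (fun d : ∀ i, α i => d i) R) :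
    (#C).factorial ≤ #(hitters C z R) := by
  let e : C ≃ R := Finset.equivOfCardEq hRC.symm
  let f : Equiv.Perm C → ∀ i, α i := fun π i => if hi : i ∈ C then (e (π ⟨i, hi⟩)).1 i else z i
  have hf_apply (π : Equiv.Perm C) (i : C) : f π i = (e (π i)).1 i := dif_pos i.2
  have hf_mem (π : Equiv.Perm C) : f π ∈ hitters C z R := by
    refine mem_hitters.2 ⟨fun i hi => dif_neg hi, fun d hd => ?_⟩
    refine ⟨(π.symm (e.symm ⟨d, hd⟩)).1, (π.symm (e.symm ⟨d, hd⟩)).2, ?_⟩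
    rw [hf_apply]
    simp
  have hf_inj : Function.Injective f := by
    intro π π' h
    ext1 i
    have hi : (e (π i)).1 i = (e (π' i)).1 i := by rw [← hf_apply, ← hf_apply, h]
    exact e.injective (Subtype.ext (hinj i i.2 (e (π i)).2 (e (π' i)).2 hi))
  calc (#C).factorial = #(univ.image f) := by
        rw [card_image_of_injective _ hf_inj, card_univ, Fintype.card_perm, Fintype.card_coe]
    _ ≤ #(hitters C z R) := card_le_card (image_subset_iff.2 fun π _ => hf_mem π)

theorem two_mul_card_add_two_le_card_hitters_add_card (hC : ∀ i ∈ C, 3 ≤ Fintype.card (α i))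
    (hC3 : 3 ≤ #C) (hRC : #R ≤ #C) : 2 * #C + 2 ≤ #(hitters C z R) + #R := by
  rcases R.eq_empty_or_nonempty with rfl | hR
  · simpa using two_mul_card_add_two_le_card_hitters_empty hC (by omega)
  rcases hRC.lt_or_eq with hlt | heq
  · have := two_mul_card_add_one_le_card_hitters (z := z) hC hlt
    have := hR.card_pos
    omega
  by_cases hinj : ∀ i ∈ C, Set.InjOn (fun d : ∀ i, α i => d i) R
  · have := factorial_card_le_card_hitters (z := z) heq hinj
    have := Nat.add_factorial_le_factorial_add (#C - 3) (n := 3) (by norm_num)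
    rw [Nat.sub_add_cancel hC3, show (3 : ℕ).factorial = 6 from rfl] at this
    omega
  -- Two rows agreeing at `p` are both met by fixing that coordinate, which removes `p` from `C`.
  simp only [Set.InjOn, not_forall, mem_coe, exists_prop] at hinj
  obtain ⟨p, hp, d₁, hd₁, d₂, hd₂, hd₁₂, hne⟩ := hinj
  let R' := {d ∈ R | d p ≠ d₁ p}
  have hR' : #R' + 2 ≤ #R := by
    have hsub : R' ⊆ (R.erase d₁).erase d₂ := fun d hd => by
      obtain ⟨hdR, hdp⟩ := mem_filter.1 hd
      refine mem_erase.2 ⟨?_, mem_erase.2 ⟨?_, hdR⟩⟩ <;> rintro rfl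
      exacts [hdp hd₁₂.symm, hdp rfl]
    have := card_le_card hsub
    rw [card_erase_of_mem (mem_erase.2 ⟨Ne.symm hne, hd₂⟩), card_erase_of_mem hd₁] at this
    omega
  have hCp : #(C.erase p) = #C - 1 := card_erase_of_mem hp
  have := two_mul_card_add_one_le_card_hitters (C := C.erase p) (z := Function.update z p (d₁ p))
    (R := R') (fun i hi => hC i (mem_of_mem_erase hi)) (by omega)
  have : #(hitters (C.erase p) _ R') ≤ #(hitters C z R) :=
    card_le_card (hitters_erase_subset hp (d₁ p))
  omega

end Hitters

section CompleteProd

variable {t : ℕ} {n : Fin t → ℕ} [∀ i, NeZero (n i)] {D : Finset (∀ i, ZMod (n i))}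

theorem hitters_subset_of_isDomSet (hD : IsDomSet (completeProd t n) D) (i₀ : Fin t)
    (z : ∀ i, ZMod (n i)) :
    hitters (univ.erase i₀) z {d ∈ D | d i₀ ≠ z i₀} ⊆ {d ∈ D | d i₀ = z i₀} := by
  intro v hv
  obtain ⟨hv_off, hv_row⟩ := mem_hitters.1 hv
  have hvi₀ : v i₀ = z i₀ := hv_off i₀ (notMem_erase i₀ univ)
  refine mem_filter.2 ⟨?_, hvi₀⟩
  rcases hD v with hvD | ⟨d, hdD, -, hdiff⟩
  · exact hvD
  obtain ⟨i, -, hvi⟩ := hv_row d (mem_filter.2 ⟨hdD, fun h => hdiff i₀ (hvi₀.trans h.symm)⟩)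
  exact absurd hvi (hdiff i)

theorem two_mul_le_card_of_isDomSet (hD : IsDomSet (completeProd t n) D) (ht : 4 ≤ t)
    (i₀ : Fin t) (hn : ∀ i ≠ i₀, 3 ≤ n i) (c : ZMod (n i₀))
    (hR : #{d ∈ D | d i₀ ≠ c} ≤ t - 1) : 2 * t ≤ #D := by
  have hC : #(univ.erase i₀) = t - 1 := by simp
  have key := two_mul_card_add_two_le_card_hitters_add_card (z := Pi.single i₀ c)
    (R := {d ∈ D | d i₀ ≠ c}) (C := univ.erase i₀)
    (fun i hi => by simpa using hn i (ne_of_mem_erase hi)) (by omega) (by omega)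
  have hsub := card_le_card (hitters_subset_of_isDomSet hD i₀ (Pi.single i₀ c))
  simp only [Pi.single_eq_same] at hsub
  have := card_filter_add_card_filter_not (s := D) (fun d => d i₀ = c)
  simp only [← ne_eq] at this
  omega

end CompleteProd

theorem stmt5 (t : ℕ) (ht : 4 ≤ t) (n : Fin t → ℕ) (hmono : Monotone n)
    (h1 : 2 ≤ n ⟨0, by omega⟩) (h2 : 3 ≤ n ⟨1, by omega⟩) :
    t + 1 + (t - 1) / (n ⟨0, by omega⟩ - 1) ≤ domNum (completeProd t n) := by
  set i₀ : Fin t := ⟨0, by omega⟩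
  have hn_pos (i : Fin t) : NeZero (n i) :=
    ⟨by have := hmono (show i₀ ≤ i from Fin.le_def.2 (Nat.zero_le _)); omega⟩
  have hn (i : Fin t) (hi : i ≠ i₀) : 3 ≤ n i :=
    h2.trans (hmono (Fin.le_def.2 (Nat.one_le_iff_ne_zero.2 fun h => hi (Fin.ext h))))
  refine le_domNum _ fun D hD => ?_
  obtain ⟨c, hc⟩ := exists_card_le_mul_card_fiber D (fun d => d i₀)
  have hsplit := card_filter_add_card_filter_not (s := D) (fun d => d i₀ = c)
  simp only [← ne_eq] at hsplit
  set q := (t - 1) / (n i₀ - 1)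
  by_cases hR : #{d ∈ D | d i₀ ≠ c} ≤ t - 1
  · have := two_mul_le_card_of_isDomSet hD ht i₀ hn c hR
    have : q ≤ t - 1 := Nat.div_le_self _ _
    omega
  -- Otherwise `F` is large, since each of the other `n i₀ - 1` fibers is at most as big.
  obtain ⟨m, hm⟩ : ∃ m, n i₀ = m + 1 := ⟨n i₀ - 1, by omega⟩
  have hq : m * q ≤ t - 1 := by
    simpa [q, hm, mul_comm] using Nat.div_mul_le_self (t - 1) (n i₀ - 1)
  have hfiber : #D ≤ m * #{d ∈ D | d i₀ = c} + #{d ∈ D | d i₀ = c} := by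
    rw [ZMod.card] at hc
    simpa [add_mul] using hc.trans_eq (congrArg (· * _) hm)
  have hq_lt : q < #{d ∈ D | d i₀ = c} := Nat.lt_of_mul_lt_mul_left (a := m) (by omega)
  omega
end

section
/- Let G = K_{n₁} × K_{n₂} × K_{n₃} × K_{n₄} (direct product) with 2 = n₁ ≤ n₂ ≤ n₃ ≤ n₄. Then the domination number of G equals 8. -/
/-!
The eight vertices `(ε, a, b, a + b)` with `ε, a, b ∈ {0, 1}` dominate: if the last three
coordinates of a vertex do not spell a word of the binary even-weight code, some codeword differs
from them in every position.

Conversely, split a dominating set `D` by the first coordinate into `D₀` and `D₁`. A vertex with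
first coordinate `ε` that shares a coordinate with every element of `D₁₋ε` is dominated by nothing
but itself, so it lies in `D_ε`. If `|D₁₋ε| ≤ 3`, there are at least `8 - |D₁₋ε|` such vertices:
in a `2 × 2 × 2` grid of the last three coordinates containing `D₁₋ε`, each point differs
everywhere from exactly one grid point; and if three points of `D₁₋ε` take three values in one
coordinate, no such grid exists, but each of the three fibres over those values contributes two.
-/

open Finset
open Fintype (piFinset mem_piFinset card_piFinset)

section NonNeighbors

variable {ι : Type*} [Fintype ι] [DecidableEq ι] {X : ι → Type*} [∀ i, DecidableEq (X i)]

def nonNeighbors [∀ i, Fintype (X i)] (S : Finset (∀ i, X i)) : Finset (∀ i, X i) :=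
  {v | ∀ s ∈ S, ∃ i, v i = s i}

@[simp]
theorem mem_nonNeighbors [∀ i, Fintype (X i)] {S : Finset (∀ i, X i)} {v : ∀ i, X i} :
    v ∈ nonNeighbors S ↔ ∀ s ∈ S, ∃ i, v i = s i := by
  simp [nonNeighbors]

theorem subsingleton_differ_piFinset {P : ∀ i, Finset (X i)} {s : ∀ i, X i}
    (hP : ∀ i, #((P i).erase (s i)) ≤ 1) :
    ({v ∈ piFinset P | ∀ i, v i ≠ s i} : Set (∀ i, X i)).Subsingleton := by
  rintro v ⟨hvP, hvs⟩ w ⟨hwP, hws⟩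
  funext i
  exact card_le_one.mp (hP i) _ (mem_erase.mpr ⟨hvs i, mem_piFinset.mp hvP i⟩) _
    (mem_erase.mpr ⟨hws i, mem_piFinset.mp hwP i⟩)

variable [∀ i, Fintype (X i)]

theorem card_piFinset_le_card_inter_nonNeighbors_add_card {P : ∀ i, Finset (X i)}
    {S : Finset (∀ i, X i)} (hS : ∀ s ∈ S, ∀ i, #((P i).erase (s i)) ≤ 1) :
    #(piFinset P) ≤ #(piFinset P ∩ nonNeighbors S) + #S := by
  have hdiff : #(piFinset P \ nonNeighbors S) ≤ #S := by
    refine card_le_card_of_forall_subsingleton (fun v s => ∀ i, v i ≠ s i) ?_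
      fun s hs => (subsingleton_differ_piFinset (hS s hs)).anti
        fun v hv => ⟨(mem_sdiff.mp hv.1).1, hv.2⟩
    intro v hv
    simpa using (mem_sdiff.mp hv).2
  rw [← card_inter_add_card_sdiff (piFinset P) (nonNeighbors S)]
  omega

theorem two_pow_le_card_filter_nonNeighbors_add_card (S : Finset (∀ i, X i)) (c : ∀ i, X i)
    (K : Finset ι) (hX : ∀ i ∉ K, 2 ≤ Fintype.card (X i)) (hS : ∀ i ∉ K, #(S.image (· i)) ≤ 2) :
    2 ^ #Kᶜ ≤ #{v ∈ nonNeighbors S | ∀ i ∈ K, v i = c i} + #S := by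
  have hQ : ∀ i, ∃ Q : Finset (X i), i ∉ K → S.image (· i) ⊆ Q ∧ #Q = 2 := fun i => by
    by_cases hi : i ∈ K
    · exact ⟨∅, fun h => absurd hi h⟩
    · obtain ⟨Q, hQ⟩ := exists_superset_card_eq (hS i hi) (hX i hi)
      exact ⟨Q, fun _ => hQ⟩
  choose Q hQ using hQ
  let P : ∀ i, Finset (X i) := fun i => if i ∈ K then {c i} else Q i
  have hcard : #(piFinset P) = 2 ^ #Kᶜ := by
    rw [card_piFinset, ← prod_compl_mul_prod K, ← prod_const]
    have hKc : ∀ i ∈ Kᶜ, #(P i) = 2 := fun i hi => by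
      simp [P, mem_compl.mp hi, (hQ i (mem_compl.mp hi)).2]
    have hK : ∀ i ∈ K, #(P i) = 1 := fun i hi => by simp [P, hi]
    rw [prod_congr rfl hKc, prod_congr rfl hK, prod_const_one, mul_one]
  have hsub : piFinset P ∩ nonNeighbors S ⊆ {v ∈ nonNeighbors S | ∀ i ∈ K, v i = c i} := by
    intro v hv
    rw [mem_inter, mem_piFinset] at hv
    refine mem_filter.mpr ⟨hv.2, fun i hi => ?_⟩
    simpa [P, hi] using hv.1 i
  calc 2 ^ #Kᶜ = #(piFinset P) := hcard.symm
    _ ≤ #(piFinset P ∩ nonNeighbors S) + #S := by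
      refine card_piFinset_le_card_inter_nonNeighbors_add_card fun s hs i => ?_
      by_cases hi : i ∈ K
      · simpa [P, hi] using card_erase_le.trans (card_singleton (c i)).le
      · have hsQ : s i ∈ Q i := (hQ i hi).1 (mem_image_of_mem _ hs)
        simp [P, hi, card_erase_of_mem hsQ, (hQ i hi).2]
    _ ≤ _ := by gcongr

end NonNeighbors

section FourCoordinates

variable {X : Fin 4 → Type*} [∀ i, DecidableEq (X i)] [∀ i, Fintype (X i)]

theorem two_le_card_filter_nonNeighbors_of_mem (hX : ∀ i ≠ 0, 2 ≤ Fintype.card (X i))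
    {S : Finset (∀ i, X i)} (hS : #S ≤ 3) (c : ∀ i, X i) {i : Fin 4} (hi : i ≠ 0)
    {x : ∀ i, X i} (hx : x ∈ S) :
    2 ≤ #{v ∈ nonNeighbors S | v 0 = c 0 ∧ v i = x i} := by
  have hK : #({0, i} : Finset (Fin 4))ᶜ = 2 := by
    rw [card_compl, card_pair hi.symm, Fintype.card_fin]
  have hcount := two_pow_le_card_filter_nonNeighbors_add_card (S.erase x)
    (Function.update x 0 (c 0)) {0, i} (fun j hj => hX j (by simp_all))
    (fun j _ => card_image_le.trans (by rw [card_erase_of_mem hx]; omega))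
  simp only [mem_insert, mem_singleton, forall_eq_or_imp, forall_eq, Function.update_self,
    Function.update_of_ne hi, hK, card_erase_of_mem hx] at hcount
  have hsub : {v ∈ nonNeighbors (S.erase x) | v 0 = c 0 ∧ v i = x i} ⊆
      {v ∈ nonNeighbors S | v 0 = c 0 ∧ v i = x i} := by
    intro v hv
    simp only [mem_filter, mem_nonNeighbors, mem_erase] at hv ⊢
    obtain ⟨hvS, hv0, hvi⟩ := hv
    refine ⟨fun s hs => ?_, hv0, hvi⟩
    by_cases hsx : s = x
    · exact ⟨i, by rw [hsx, hvi]⟩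
    · exact hvS s ⟨hsx, hs⟩
  have := card_le_card hsub
  omega

theorem eight_le_card_add_card_filter_nonNeighbors (hX : ∀ i ≠ 0, 2 ≤ Fintype.card (X i))
    {S : Finset (∀ i, X i)} (hS : #S ≤ 3) (c : ∀ i, X i) :
    8 ≤ #S + #{v ∈ nonNeighbors S | v 0 = c 0} := by
  by_cases hsmall : ∀ i ≠ 0, #(S.image (· i)) ≤ 2
  · have := two_pow_le_card_filter_nonNeighbors_add_card S c {0} (by simpa using hX)
      (by simpa using hsmall)
    simp only [mem_singleton, forall_eq, card_compl, card_singleton, Fintype.card_fin] at this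
    omega
  push Not at hsmall
  obtain ⟨i, hi, hSi⟩ := hsmall
  have himage : #(S.image (· i)) = #S := le_antisymm card_image_le (by omega)
  have hinj : Set.InjOn (fun x : ∀ j, X j => x i) S := card_image_iff.mp himage
  let F : (∀ i, X i) → Finset (∀ i, X i) := fun x => {v ∈ nonNeighbors S | v 0 = c 0 ∧ v i = x i}
  have hdisj : (S : Set (∀ i, X i)).PairwiseDisjoint F := by
    intro x hx y hy hxy
    refine disjoint_filter.mpr fun v _ hvx hvy => hxy (hinj hx hy ?_)
    exact hvx.2.symm.trans hvy.2
  have hunion : S.biUnion F ⊆ {v ∈ nonNeighbors S | v 0 = c 0} := by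
    intro v hv
    obtain ⟨x, -, hvx⟩ := mem_biUnion.mp hv
    simp only [F, mem_filter] at hvx ⊢
    exact ⟨hvx.1, hvx.2.1⟩
  calc 8 ≤ #S + 2 * #S := by omega
    _ = #S + ∑ _ ∈ S, 2 := by rw [sum_const, smul_eq_mul, mul_comm]
    _ ≤ #S + ∑ x ∈ S, #(F x) := by
      gcongr with x hx
      exact two_le_card_filter_nonNeighbors_of_mem hX hS c hi hx
    _ = #S + #(S.biUnion F) := by rw [card_biUnion hdisj]
    _ ≤ _ := by gcongr

end FourCoordinates

section CompleteProd

theorem completeProd_adj_iff {t : ℕ} [NeZero t] {n : Fin t → ℕ} {x y : ∀ i, ZMod (n i)} :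
    (completeProd t n).Adj x y ↔ ∀ i, x i ≠ y i :=
  ⟨And.right, fun h => ⟨fun hxy => h 0 (congrFun hxy 0), h⟩⟩

theorem filter_nonNeighbors_subset_of_isDomSet {t : ℕ} {n : Fin t → ℕ} [∀ i, NeZero (n i)]
    {D : Finset (∀ i, ZMod (n i))} (hD : IsDomSet (completeProd t n) D) (k : Fin t)
    (ε : ZMod (n k)) :
    {v ∈ nonNeighbors {d ∈ D | d k ≠ ε} | v k = ε} ⊆ {d ∈ D | d k = ε} := by
  intro v hv
  rw [mem_filter, mem_nonNeighbors] at hv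
  refine mem_filter.mpr ⟨(hD v).resolve_right ?_, hv.2⟩
  rintro ⟨d, hd, -, hvd⟩
  obtain ⟨i, hi⟩ := hv.1 d (mem_filter.mpr ⟨hd, hv.2 ▸ (hvd k).symm⟩)
  exact hvd i hi

variable {n : Fin 4 → ℕ} [∀ i, NeZero (n i)]

theorem eight_le_card_of_isDomSet_of_card_le_three (hn : ∀ i ≠ 0, 2 ≤ n i)
    {D : Finset (∀ i, ZMod (n i))} (hD : IsDomSet (completeProd 4 n) D) (c : ∀ i, ZMod (n i))
    (hc : #{d ∈ D | d 0 ≠ c 0} ≤ 3) : 8 ≤ #D :=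
  calc 8 ≤ #{d ∈ D | d 0 ≠ c 0} + #{v ∈ nonNeighbors {d ∈ D | d 0 ≠ c 0} | v 0 = c 0} :=
        eight_le_card_add_card_filter_nonNeighbors (by simpa using hn) hc c
    _ ≤ #{d ∈ D | d 0 ≠ c 0} + #{d ∈ D | d 0 = c 0} := by
        grw [filter_nonNeighbors_subset_of_isDomSet hD 0 (c 0)]
    _ = #D := by rw [add_comm, card_filter_add_card_filter_not]

theorem eq_zero_or_eq_one_of_eq_two {m : ℕ} (hm : m = 2) (x : ZMod m) : x = 0 ∨ x = 1 := by
  subst hm; revert x; decide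

theorem eight_le_card_of_isDomSet (h0 : n 0 = 2) (hn : ∀ i ≠ 0, 2 ≤ n i)
    {D : Finset (∀ i, ZMod (n i))} (hD : IsDomSet (completeProd 4 n) D) : 8 ≤ #D := by
  by_cases hD₀ : #{d ∈ D | d 0 ≠ 0} ≤ 3
  · exact eight_le_card_of_isDomSet_of_card_le_three hn hD 0 hD₀
  by_cases hD₁ : #{d ∈ D | d 0 ≠ 1} ≤ 3
  · exact eight_le_card_of_isDomSet_of_card_le_three hn hD 1 hD₁
  have hdisj : Disjoint {d ∈ D | d 0 ≠ 0} {d ∈ D | d 0 ≠ 1} :=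
    disjoint_filter.mpr fun d _ hd₀ hd₁ => (eq_zero_or_eq_one_of_eq_two h0 (d 0)).elim hd₀ hd₁
  calc 8 ≤ #{d ∈ D | d 0 ≠ 0} + #{d ∈ D | d 0 ≠ 1} := by omega
    _ = #({d ∈ D | d 0 ≠ 0} ∪ {d ∈ D | d 0 ≠ 1}) := (card_union_of_disjoint hdisj).symm
    _ ≤ #D := card_le_card (union_subset (filter_subset _ _) (filter_subset _ _))

end CompleteProd

section EvenCode

def decodeBit {m : ℕ} (x : ZMod m) : Option Bool :=
  if x = 0 then some false else if x = 1 then some true else none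

theorem decodeBit_eq_some_iff {m : ℕ} (hm : 2 ≤ m) {x : ZMod m} {b : Bool} :
    decodeBit x = some b ↔ x = cond b 1 0 := by
  have : Fact (1 < m) := ⟨hm⟩
  by_cases h0 : x = 0 <;> by_cases h1 : x = 1 <;> cases b <;> simp_all [decodeBit]

theorem decodeBit_cond {m : ℕ} (hm : 2 ≤ m) (b : Bool) :
    decodeBit (cond b (1 : ZMod m) 0) = some b :=
  (decodeBit_eq_some_iff hm).mpr rfl

theorem isSome_decodeBit_of_eq_two {m : ℕ} (hm : m = 2) (x : ZMod m) :
    (decodeBit x).isSome := by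
  subst hm; revert x; decide

/-- `none` stands for a value outside `{0, 1}`. -/
theorem evenCode_dominates : ∀ o₀ o₁ o₂ o₃ : Option Bool, o₀.isSome →
    (∃ ε a b, o₀ ≠ some ε ∧ o₁ ≠ some a ∧ o₂ ≠ some b ∧ o₃ ≠ some (xor a b)) ∨
      ∃ ε a b, o₀ = some ε ∧ o₁ = some a ∧ o₂ = some b ∧ o₃ = some (xor a b) := by
  decide

def evenCodeword (n : Fin 4 → ℕ) (w : Bool × Bool × Bool) : ∀ i, ZMod (n i) :=
  fun i => cond (![w.1, w.2.1, w.2.2, xor w.2.1 w.2.2] i) 1 0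

variable {n : Fin 4 → ℕ}

theorem evenCodeword_injective (hn : ∀ i, 2 ≤ n i) : Function.Injective (evenCodeword n) := by
  intro w w' h
  have hbit : ∀ i, ![w.1, w.2.1, w.2.2, xor w.2.1 w.2.2] i =
      ![w'.1, w'.2.1, w'.2.2, xor w'.2.1 w'.2.2] i :=
    fun i => Option.some_injective _ <| by
      simpa only [evenCodeword, decodeBit_cond (hn i)] using congrArg decodeBit (congrFun h i)
  exact Prod.ext (hbit 0) (Prod.ext (hbit 1) (hbit 2))

theorem isDomSet_range_evenCodeword (h0 : n 0 = 2) (hn : ∀ i, 2 ≤ n i) :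
    IsDomSet (completeProd 4 n) (Set.range (evenCodeword n)) := by
  intro v
  have hdec : ∀ i b, decodeBit (v i) = some b ↔ v i = cond b 1 0 :=
    fun i _ => decodeBit_eq_some_iff (hn i)
  rcases evenCode_dominates _ (decodeBit (v 1)) (decodeBit (v 2)) (decodeBit (v 3))
    (isSome_decodeBit_of_eq_two h0 (v 0)) with ⟨ε, a, b, h⟩ | ⟨ε, a, b, h⟩
  · refine .inr ⟨_, ⟨(ε, a, b), rfl⟩, completeProd_adj_iff.mpr fun i => ?_⟩
    fin_cases i
    exacts [(hdec 0 _).not.mp h.1, (hdec 1 _).not.mp h.2.1, (hdec 2 _).not.mp h.2.2.1,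
      (hdec 3 _).not.mp h.2.2.2]
  · refine .inl ⟨(ε, a, b), funext fun i => ?_⟩
    fin_cases i
    exacts [((hdec 0 _).mp h.1).symm, ((hdec 1 _).mp h.2.1).symm, ((hdec 2 _).mp h.2.2.1).symm,
      ((hdec 3 _).mp h.2.2.2).symm]

end EvenCode

theorem domNum_eq_ncard {V : Type*} {G : SimpleGraph V} {D : Set V} (hD : IsDomSet G D)
    (hmin : ∀ D', IsDomSet G D' → D.ncard ≤ D'.ncard) : domNum G = D.ncard :=
  le_antisymm (Nat.sInf_le ⟨D, hD, rfl⟩)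
    (le_csInf ⟨_, D, hD, rfl⟩ fun _ ⟨D', hD', hk⟩ => hk ▸ hmin D' hD')

theorem stmt6 (n : Fin 4 → ℕ) (hmono : Monotone n) (h0 : n 0 = 2) :
    domNum (completeProd 4 n) = 8 := by
  classical
  have hn : ∀ i, 2 ≤ n i := fun i => h0 ▸ hmono (Fin.zero_le i)
  have : ∀ i, NeZero (n i) := fun i => NeZero.of_pos (zero_lt_two.trans_le (hn i))
  have hcard : (Set.range (evenCodeword n)).ncard = 8 := by
    rw [Set.ncard_range_of_injective (evenCodeword_injective hn)]; simp
  rw [← hcard]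
  refine domNum_eq_ncard (isDomSet_range_evenCodeword h0 hn) fun D hD => ?_
  rw [hcard, Set.ncard_eq_toFinset_card' D]
  exact eight_le_card_of_isDomSet h0 (fun i _ => hn i) (by simpa using hD)
end

section
/- Let q be a prime with q ≡ 1 (mod 3), k = 2(q-1)/3, and p₁, ..., p_k distinct primes each at least q+3. Let n = 3·q·p₁⋯p_k. Choose y ∈ ℤ/nℤ with y ≡ 1 (mod 3), y ≡ -1 (mod q), and y ≡ -1 (mod p_i) for all i. Then D = {0, 1, ..., q+1, y} is a total dominating set of the unitary Cayley graph X_n of size q+3. -/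
/-!
A vertex `v` is adjacent to `y` unless `v` agrees with `y` modulo `3`, `q` or some `p i`.
If it does, count the `2 (q + 2) / 3` integers `d ≤ q + 1` with `d ≢ v (mod 3)`: at most two of
them are `≡ v (mod q)` (namely `v % q` and `v % q + q`), and since `p i > q + 1` each `p i` rules
out at most one (namely `v % p i`). The agreement with `y` saves one of these `k + 2`
obstructions, and `k + 1 < 2 (q + 2) / 3` leaves some `d` adjacent to `v`.
-/

open Finset

lemma unitaryCayley_adj_natCast_of_le {n a b : ℕ} (hn : n ≠ 1) (hba : b ≤ a)
    (h : ∀ r, r.Prime → r ∣ n → ¬ a ≡ b [MOD r]) : (unitaryCayley n).Adj a b := by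
  have hunit : IsUnit ((a : ZMod n) - b) := by
    rw [← Nat.cast_sub hba, ZMod.isUnit_iff_coprime]
    exact Nat.coprime_of_dvd fun r hr hrab hrn =>
      h r hr hrn ((Nat.modEq_iff_dvd' hba).mpr hrab).symm
  have : Nontrivial (ZMod n) := ZMod.nontrivial_iff.mpr hn
  refine ⟨fun hab => ?_, hunit⟩
  rw [hab, sub_self] at hunit
  exact not_isUnit_zero hunit

lemma unitaryCayley_adj_natCast {n a b : ℕ} (hn : n ≠ 1)
    (h : ∀ r, r.Prime → r ∣ n → ¬ a ≡ b [MOD r]) : (unitaryCayley n).Adj a b := by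
  rcases le_total b a with hba | hab
  · exact unitaryCayley_adj_natCast_of_le hn hba h
  · exact (unitaryCayley_adj_natCast_of_le hn hab fun r hr hrn hba =>
      h r hr hrn hba.symm).symm

lemma eq_or_eq_or_exists_eq_of_prime_dvd_mul_mul_prod {ι : Type*} [Fintype ι] {r a b : ℕ}
    {p : ι → ℕ} (hr : r.Prime) (ha : a.Prime) (hb : b.Prime) (hp : ∀ i, (p i).Prime)
    (h : r ∣ a * b * ∏ i, p i) : r = a ∨ r = b ∨ ∃ i, r = p i := by
  rcases hr.dvd_mul.mp h with hab | hprod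
  · rcases hr.dvd_mul.mp hab with hra | hrb
    · exact Or.inl ((Nat.prime_dvd_prime_iff_eq hr ha).mp hra)
    · exact Or.inr (Or.inl ((Nat.prime_dvd_prime_iff_eq hr hb).mp hrb))
  · obtain ⟨i, -, hri⟩ := (Prime.dvd_finsetProd_iff hr.prime p).mp hprod
    exact Or.inr (Or.inr ⟨i, (Nat.prime_dvd_prime_iff_eq hr (hp i)).mp hri⟩)

lemma unitaryCayley_three_mul_mul_prod_adj {ι : Type*} [Fintype ι] {q : ℕ} {p : ι → ℕ}
    (hq : q.Prime) (hp : ∀ i, (p i).Prime) {a b : ℕ} (h3 : ¬ a ≡ b [MOD 3])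
    (hq' : ¬ a ≡ b [MOD q]) (hp' : ∀ i, ¬ a ≡ b [MOD p i]) :
    (unitaryCayley (3 * q * ∏ i, p i)).Adj a b := by
  refine unitaryCayley_adj_natCast ?_ fun r hr hrn => ?_
  · exact fun h => by have := Nat.eq_one_of_mul_eq_one_right h; omega
  rcases eq_or_eq_or_exists_eq_of_prime_dvd_mul_mul_prod hr Nat.prime_three hq hp hrn
    with rfl | rfl | ⟨i, rfl⟩
  exacts [h3, hq', hp' i]

lemma ncard_setOf_eq_natCast_le {n m : ℕ} (hmn : m < n) :
    {x : ZMod n | ∃ j : ℕ, j ≤ m ∧ x = j}.ncard = m + 1 := by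
  have himage :
      {x : ZMod n | ∃ j : ℕ, j ≤ m ∧ x = j} = (Nat.cast : ℕ → ZMod n) '' Set.Iic m := by
    ext x
    simp [eq_comm]
  have hinj : Set.InjOn (Nat.cast : ℕ → ZMod n) (Set.Iic m) := fun a ha b hb hab => by
    have hval := congrArg ZMod.val hab
    rwa [ZMod.val_cast_of_lt (lt_of_le_of_lt ha hmn),
      ZMod.val_cast_of_lt (lt_of_le_of_lt hb hmn)] at hval
  rw [himage, hinj.ncard_image, Set.ncard_Iic_nat]

lemma card_filter_range_not_modEq {N r : ℕ} (hr : 0 < r) (hrN : r ∣ N) (v : ℕ) :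
    #{d ∈ range N | ¬ d ≡ v [MOD r]} = N - N / r := by
  have hsplit := card_filter_add_card_filter_not (s := range N) (· ≡ v [MOD r])
  rw [← Nat.count_eq_card_filter_range, Nat.count_modEq_card _ hr, Nat.mod_eq_zero_of_dvd hrN,
    card_range] at hsplit
  simp only [Nat.not_lt_zero, if_false, add_zero] at hsplit
  omega

lemma eq_mod_or_eq_mod_add_of_modEq {q d v : ℕ} (hq : 2 ≤ q) (hd : d < q + 2)
    (h : d ≡ v [MOD q]) : d = v % q ∨ d = v % q + q := by
  have hdiv := Nat.div_add_mod d q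
  have hlt : d / q < 2 := Nat.div_lt_of_lt_mul (by omega)
  unfold Nat.ModEq at h
  interval_cases hquot : d / q <;> omega

lemma card_filter_range_modEq_le_two {q : ℕ} (hq : 2 ≤ q) (v : ℕ) :
    #{d ∈ range (q + 2) | d ≡ v [MOD q]} ≤ 2 := by
  refine (card_le_card fun d hd => ?_).trans (card_le_two (a := v % q) (b := v % q + q))
  rw [mem_filter, mem_range] at hd
  rcases eq_mod_or_eq_mod_add_of_modEq hq hd.1 hd.2 with rfl | rfl <;> simp

lemma card_filter_range_modEq_le_one_of_mod_eq_sub_one {q v : ℕ} (hq : 3 ≤ q)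
    (hv : v % q = q - 1) : #{d ∈ range (q + 2) | d ≡ v [MOD q]} ≤ 1 := by
  refine card_le_one.mpr fun d hd d' hd' => ?_
  rw [mem_filter, mem_range] at hd hd'
  have := eq_mod_or_eq_mod_add_of_modEq (by omega) hd.1 hd.2
  have := eq_mod_or_eq_mod_add_of_modEq (by omega) hd'.1 hd'.2
  omega

-- Both `v % q` and `v % q + q` lie below `q + 2` only if `v % q ≤ 1`, and then, as
-- `q ≡ 1 (mod 3)`, one of them is `≡ 1 (mod 3)`.
lemma card_filter_range_not_modEq_three_modEq_le_one {q v : ℕ} (hq : 2 ≤ q) (hq3 : q % 3 = 1)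
    (hv : v % 3 = 1) : #{d ∈ range (q + 2) | ¬ d ≡ v [MOD 3] ∧ d ≡ v [MOD q]} ≤ 1 := by
  refine card_le_one.mpr fun d hd d' hd' => ?_
  rw [mem_filter, mem_range] at hd hd'
  have := eq_mod_or_eq_mod_add_of_modEq hq hd.1 hd.2.2
  have := eq_mod_or_eq_mod_add_of_modEq hq hd'.1 hd'.2.2
  unfold Nat.ModEq at hd hd'
  omega

lemma card_filter_range_exists_modEq_le {k N : ℕ} {p : Fin k → ℕ}
    (hp : ∀ i, N ≤ p i) (v : ℕ) :
    #{d ∈ range N | ∃ i, d ≡ v [MOD p i]} ≤ #{i | v % p i < N} := by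
  refine (card_le_card fun d hd => ?_).trans (card_image_le (f := fun i => v % p i))
  rw [mem_filter, mem_range] at hd
  obtain ⟨hdN, i, hdv⟩ := hd
  have hdi : d = v % p i := (Nat.mod_eq_of_lt (lt_of_lt_of_le hdN (hp i))).symm.trans hdv
  exact mem_image.mpr ⟨i, mem_filter.mpr ⟨mem_univ i, hdi ▸ hdN⟩, hdi.symm⟩

theorem exists_le_not_modEq {q k : ℕ} (hq : 2 ≤ q) (hq3 : q % 3 = 1) (hk : 3 * k ≤ 2 * q)
    {p : Fin k → ℕ} (hp : ∀ i, q + 3 ≤ p i) {v : ℕ}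
    (hv : v % 3 = 1 ∨ v % q = q - 1 ∨ ∃ i, v % p i = p i - 1) :
    ∃ d ≤ q + 1, ¬ d ≡ v [MOD 3] ∧ ¬ d ≡ v [MOD q] ∧ ∀ i, ¬ d ≡ v [MOD p i] := by
  by_contra! hbad
  set C := {d ∈ range (q + 2) | ¬ d ≡ v [MOD 3]}
  set Q := {d ∈ range (q + 2) | ¬ d ≡ v [MOD 3] ∧ d ≡ v [MOD q]}
  set P := {d ∈ range (q + 2) | ∃ i, d ≡ v [MOD p i]}
  have hC : #C = q + 2 - (q + 2) / 3 := card_filter_range_not_modEq (by norm_num) (by omega) v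
  have hCQP : C ⊆ Q ∪ P := fun d hd => by
    rw [mem_filter, mem_range] at hd
    by_cases hdq : d ≡ v [MOD q]
    · exact mem_union_left _ (mem_filter.mpr ⟨mem_range.mpr hd.1, hd.2, hdq⟩)
    · exact mem_union_right _ (mem_filter.mpr ⟨mem_range.mpr hd.1, hbad d (by omega) hd.2 hdq⟩)
  have hQ : #Q ≤ #{d ∈ range (q + 2) | d ≡ v [MOD q]} :=
    card_le_card fun d hd => by
      rw [mem_filter] at hd ⊢
      exact ⟨hd.1, hd.2.2⟩
  have hP : #P ≤ #{i | v % p i < q + 2} :=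
    card_filter_range_exists_modEq_le (fun i => (hp i).trans' (by omega)) v
  have hQP : #Q + #P ≤ k + 1 := by
    have hPk : #{i | v % p i < q + 2} ≤ k := (card_filter_le _ _).trans_eq (card_fin k)
    rcases hv with hv3 | hvq | ⟨i, hvi⟩
    · have hQ1 : #Q ≤ 1 := card_filter_range_not_modEq_three_modEq_le_one hq hq3 hv3
      omega
    · have hQ1 := card_filter_range_modEq_le_one_of_mod_eq_sub_one (by omega) hvq
      omega
    · have hi : i ∉ ({i | v % p i < q + 2} : Finset (Fin k)) := by
        simp only [mem_filter, mem_univ, true_and, not_lt]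
        have := hp i
        omega
      have hPk' := (card_lt_univ_of_notMem hi).trans_eq (Fintype.card_fin k)
      have hQ2 := card_filter_range_modEq_le_two hq v
      omega
  have := (card_le_card hCQP).trans (card_union_le Q P)
  omega

theorem stmt13_general (q k : ℕ) (hq : q.Prime) (hq3 : q % 3 = 1) (hk : k = 2 * (q - 1) / 3)
    (p : Fin k → ℕ) (hp : ∀ i, (p i).Prime)
    (hge : ∀ i, q + 3 ≤ p i)
    (n : ℕ) (hn : n = 3 * q * ∏ i, p i)
    (y : ZMod n) (hy3 : y.val % 3 = 1) (hyq : y.val % q = q - 1)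
    (hyp : ∀ i, y.val % p i = p i - 1) :
    IsTotalDomSet (unitaryCayley n)
      ({x : ZMod n | ∃ j : ℕ, j ≤ q + 1 ∧ x = (j : ZMod n)} ∪ {y}) ∧
    ({x : ZMod n | ∃ j : ℕ, j ≤ q + 1 ∧ x = (j : ZMod n)} ∪ {y} : Set (ZMod n)).ncard
      = q + 3 := by
  have hq2 := hq.two_le
  have hqn : q + 1 < n := by
    have : 0 < ∏ i, p i := Finset.prod_pos fun i _ => (hp i).pos
    rw [hn]
    nlinarith
  have : NeZero n := ⟨by omega⟩
  have hyD : y ∉ {x : ZMod n | ∃ j : ℕ, j ≤ q + 1 ∧ x = (j : ZMod n)} := by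
    rintro ⟨j, hj, rfl⟩
    rw [ZMod.val_cast_of_lt (by omega)] at hy3 hyq
    have := eq_mod_or_eq_mod_add_of_modEq hq2 (by omega : j < q + 2) (Nat.ModEq.refl j)
    omega
  subst hn
  refine ⟨fun v => ?_, ?_⟩
  · rw [← ZMod.natCast_zmod_val v]
    by_cases hv : v.val % 3 = 1 ∨ v.val % q = q - 1 ∨ ∃ i, v.val % p i = p i - 1
    · obtain ⟨d, hd, h3, hq', hp'⟩ := exists_le_not_modEq hq2 hq3 (by omega) hge hv
      exact ⟨d, Or.inl ⟨d, hd, rfl⟩,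
        unitaryCayley_three_mul_mul_prod_adj hq hp (fun h => h3 h.symm) (fun h => hq' h.symm)
          fun i h => hp' i h.symm⟩
    · simp only [not_or, not_exists] at hv
      obtain ⟨hv3, hvq, hvp⟩ := hv
      refine ⟨y, Or.inr rfl, ?_⟩
      rw [← ZMod.natCast_zmod_val y]
      exact unitaryCayley_three_mul_mul_prod_adj hq hp (fun h => hv3 (Eq.trans h hy3))
        (fun h => hvq (Eq.trans h hyq)) fun i h => hvp i (Eq.trans h (hyp i))
  · rw [Set.union_singleton, Set.ncard_insert_of_notMem hyD, ncard_setOf_eq_natCast_le hqn]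

theorem stmt13 (q k : ℕ) (hq : q.Prime) (hq3 : q % 3 = 1) (hk : k = 2 * (q - 1) / 3)
    (p : Fin k → ℕ) (hp : ∀ i, (p i).Prime) (hinj : Function.Injective p)
    (hge : ∀ i, q + 3 ≤ p i)
    (n : ℕ) (hn : n = 3 * q * ∏ i, p i)
    (y : ZMod n) (hy3 : y.val % 3 = 1) (hyq : y.val % q = q - 1)
    (hyp : ∀ i, y.val % p i = p i - 1) :
    IsTotalDomSet (unitaryCayley n)
      ({x : ZMod n | ∃ j : ℕ, j ≤ q + 1 ∧ x = (j : ZMod n)} ∪ {y}) ∧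
    ({x : ZMod n | ∃ j : ℕ, j ≤ q + 1 ∧ x = (j : ZMod n)} ∪ {y} : Set (ZMod n)).ncard
      = q + 3 :=
  stmt13_general q k hq hq3 hk p hp hge n hn y hy3 hyq hyp
end

section
/- Let G = K[a₁,b₁] × ⋯ × K[a_t,b_t] (direct product of balanced complete multipartite graphs) with 2 ≤ b₁ ≤ b₂ ≤ ⋯ ≤ b_t. Then the upper domination number Γ(G) satisfies Γ(G) ≥ (1/b₁)·∏_{i=1}^t a_i b_i. In fact, if P is one partite set of K[a₁,b₁], then the set of all vertices of G whose first coordinate lies in P is a minimal dominating set of this size. -/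
/-!
A partite set `P` of the first factor `K[a₀, b₀]` lifts to the set `D` of vertices whose first
coordinate lies in `P`. No two vertices of `D` are adjacent, since they agree in the first
coordinate modulo `b₀`; so `D` is independent, and an independent dominating set is minimal.
`D` dominates because any vertex `v ∉ D` is adjacent to the vertex whose coordinates are `1` where
`v` has residue `0` and `0` elsewhere (this needs every `bᵢ ≥ 2`); that vertex lies in `D` because
`v₀ ≢ 0`. Finally `|D| = |V| / b₀`, since exactly `a₀` elements of `ℤ/(a₀b₀)` are `≡ 0 (mod b₀)`.
-/

section Domination

variable {V : Type*} {G : SimpleGraph V} {D : Set V}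

theorem IsDomSet.isMinimalDomSet (hD : IsDomSet G D) (hI : G.IsIndepSet D) :
    IsMinimalDomSet G D := by
  refine ⟨hD, fun D' hD' hdom' => ?_⟩
  obtain ⟨v, hvD, hvD'⟩ := Set.exists_of_ssubset hD'
  rcases hdom' v with hv | ⟨d, hd, hadj⟩
  · exact hvD' hv
  · exact hI hvD (hD'.subset hd) hadj.ne hadj

theorem IsMinimalDomSet.ncard_le_upperDomNum [Finite V] (hD : IsMinimalDomSet G D) :
    D.ncard ≤ upperDomNum G :=
  le_csSup ⟨Nat.card V, by rintro k ⟨D', -, rfl⟩; exact Set.ncard_le_card D'⟩ ⟨D, hD, rfl⟩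

end Domination

theorem Set.ncard_setOf_apply_mem {ι : Type*} [Fintype ι] [DecidableEq ι] {β : ι → Type*}
    [∀ j, Finite (β j)] (i : ι) (s : Set (β i)) :
    {x : ∀ j, β j | x i ∈ s}.ncard = s.ncard * ∏ j : {j // j ≠ i}, Nat.card (β j) := by
  rw [← Nat.card_coe_set_eq, ← Nat.card_coe_set_eq s, ← Nat.card_pi, ← Nat.card_prod]
  exact Nat.card_congr (((Equiv.piSplitAt i β).subtypeEquiv fun _ => Iff.rfl).trans
    Equiv.prodSubtypeFstEquivSubtypeProd)

theorem ZMod.card_val_modEq (m k v : ℕ) [NeZero (m * k)] :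
    Nat.card {z : ZMod (m * k) // z.val ≡ v [MOD k]} = m := by
  have hk : 0 < k := Nat.pos_of_ne_zero (right_ne_zero_of_mul (NeZero.ne (m * k)))
  let e : {z : ZMod (m * k) // z.val ≡ v [MOD k]} ≃ {n : ℕ // n < m * k ∧ n ≡ v [MOD k]} :=
    { toFun z := ⟨z.1.val, z.1.val_lt, z.2⟩
      invFun n := ⟨n.1, by rw [ZMod.val_cast_of_lt n.2.1]; exact n.2.2⟩
      left_inv z := Subtype.ext (ZMod.natCast_zmod_val z.1)
      right_inv n := Subtype.ext (ZMod.val_cast_of_lt n.2.1) }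
  have hcount := Nat.count_modEq_card (m * k) hk v
  rw [Nat.count_eq_card_fintype, Fintype.card_eq_nat_card, Nat.mul_mod_left,
    Nat.mul_div_cancel _ hk] at hcount
  rw [Nat.card_congr e, hcount]
  simp

theorem ZMod.val_one_mod_of_two_le {n k : ℕ} (hk : 2 ≤ k) :
    (1 : ZMod (n * k)).val % k = 1 := by
  rw [ZMod.val_one_eq_one_mod, Nat.mod_mod_of_dvd _ (dvd_mul_left k n)]
  exact Nat.mod_eq_of_lt hk

section MultipartiteProd

variable {t : ℕ} {a b : Fin t → ℕ}

theorem multipartiteProd_isDomSet (hb : ∀ i, 2 ≤ b i) (i₀ : Fin t) :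
    IsDomSet (multipartiteProd t a b) {x | (x i₀).val % b i₀ = 0} := by
  intro v
  by_cases hv : (v i₀).val % b i₀ = 0
  · exact Or.inl hv
  let d : ∀ i, ZMod (a i * b i) := fun i => if (v i).val % b i = 0 then 1 else 0
  have hne : ∀ i, (v i).val % b i ≠ (d i).val % b i := by
    intro i
    by_cases hvi : (v i).val % b i = 0
    · simp only [d, if_pos hvi, ZMod.val_one_mod_of_two_le (hb i)]
      omega
    · simpa only [d, if_neg hvi, ZMod.val_zero, Nat.zero_mod] using hvi
  refine Or.inr ⟨d, ?_, fun h => hne i₀ (h ▸ rfl), hne⟩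
  simp only [Set.mem_ofPred_eq, d, if_neg hv, ZMod.val_zero, Nat.zero_mod]

theorem multipartiteProd_isIndepSet (i₀ : Fin t) (r : ℕ) :
    (multipartiteProd t a b).IsIndepSet {x | (x i₀).val % b i₀ = r} :=
  fun _ hx _ hy _ hadj => hadj.2 i₀ (hx.trans hy.symm)

theorem ncard_setOf_apply_val_mod_eq_zero [∀ i, NeZero (a i * b i)] (i₀ : Fin t) :
    {x : ∀ i, ZMod (a i * b i) | (x i₀).val % b i₀ = 0}.ncard = (∏ i, a i * b i) / b i₀ := by
  have hb : 0 < b i₀ := Nat.pos_of_ne_zero (right_ne_zero_of_mul (NeZero.ne (a i₀ * b i₀)))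
  have hres : Nat.card {z : ZMod (a i₀ * b i₀) // z.val % b i₀ = 0} = a i₀ := by
    simpa only [Nat.ModEq, Nat.zero_mod] using ZMod.card_val_modEq (a i₀) (b i₀) 0
  refine (Set.ncard_setOf_apply_mem (β := fun i => ZMod (a i * b i)) i₀
    {z : ZMod (a i₀ * b i₀) | z.val % b i₀ = 0}).trans ?_
  rw [← Nat.card_coe_set_eq, Set.coe_ofPred, hres, Fintype.prod_eq_mul_prod_subtype_ne _ i₀,
    mul_right_comm, Nat.mul_div_cancel _ hb]
  simp only [Nat.card_zmod]

end MultipartiteProd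

theorem stmt16 (t : ℕ) (ht : 0 < t) (a b : Fin t → ℕ) (ha : ∀ i, 0 < a i)
    (hb : 2 ≤ b ⟨0, ht⟩) (hmono : Monotone b) :
    IsMinimalDomSet (multipartiteProd t a b)
      {x | (x ⟨0, ht⟩).val % b ⟨0, ht⟩ = 0} ∧
    ({x : ∀ i, ZMod (a i * b i) | (x ⟨0, ht⟩).val % b ⟨0, ht⟩ = 0}).ncard
        = (∏ i, a i * b i) / b ⟨0, ht⟩ ∧
    (∏ i, a i * b i) / b ⟨0, ht⟩ ≤ upperDomNum (multipartiteProd t a b) := by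
  set i₀ : Fin t := ⟨0, ht⟩
  have hb₂ : ∀ i, 2 ≤ b i := fun i => hb.trans (hmono (Nat.zero_le i))
  have : ∀ i, NeZero (a i * b i) := fun i => ⟨(Nat.mul_pos (ha i) (by linarith [hb₂ i])).ne'⟩
  have hmin := (multipartiteProd_isDomSet (a := a) hb₂ i₀).isMinimalDomSet
    (multipartiteProd_isIndepSet i₀ 0)
  have hcard := ncard_setOf_apply_val_mod_eq_zero (a := a) (b := b) i₀
  exact ⟨hmin, hcard, hcard ▸ hmin.ncard_le_upperDomNum⟩
end

section
/- For the direct product G = K[a₁,b₁] × K[a₂,b₂] of two balanced complete multipartite graphs with 2 ≤ b₁ ≤ b₂, the upper domination number satisfies Γ(G) = (a₁ b₁ a₂ b₂)/b₁ = a₁ a₂ b₂. -/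
/-!
Two vertices are adjacent iff their cells `(x 0 mod b 0, x 1 mod b 1)` differ in both
coordinates, so a column of cells is an independent dominating set of size `a 0 * a 1 * b 1`.
Conversely, let `D` be a minimal dominating set. If some `s ∈ D` has no neighbour in `D`, then
`D` lies in the cross of rows and columns through the cell of `s`; either `D` fits in one line,
or the one element of `D` in the column arm has a private neighbour in the row of `s`, and
exchanging the two puts `D` injectively into that row. Otherwise every `d ∈ D` has an external
private neighbour `w d`. If these lie in distinct columns then `|D| ≤ b 0`; if `w d₁` and `w d₂`
share a column, it contains all of `D` except `d₁, d₂`, and exchanging `d₁, d₂` for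
`w d₁, w d₂` puts `D` injectively into that column.
-/

variable {V : Type*}

def IsExtPrivateNeighbor (G : SimpleGraph V) (D : Set V) (d w : V) : Prop :=
  w ∉ D ∧ G.Adj w d ∧ ∀ d' ∈ D, G.Adj w d' → d' = d

theorem IsMinimalDomSet.isolated_or_exists_isExtPrivateNeighbor {G : SimpleGraph V} {D : Set V}
    (hD : IsMinimalDomSet G D) {d : V} (hd : d ∈ D) :
    (∀ d' ∈ D, ¬ G.Adj d d') ∨ ∃ w, IsExtPrivateNeighbor G D d w := by
  obtain ⟨w, hw, hwD⟩ : ∃ w, w ∉ D \ {d} ∧ ∀ e ∈ D \ {d}, ¬ G.Adj w e := by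
    simpa [IsDomSet] using hD.2 _ (Set.sdiff_singleton_ssubset.2 hd)
  have hpriv : ∀ d' ∈ D, G.Adj w d' → d' = d := fun d' hd' h => by
    by_contra hne
    exact hwD d' ⟨hd', hne⟩ h
  by_cases hwd : w = d
  · subst hwd
    exact Or.inl fun d' hd' h => G.ne_of_adj h (hpriv d' hd' h).symm
  · have hwD' : w ∉ D := fun h => hw ⟨h, hwd⟩
    obtain ⟨e, he, hadj⟩ := (hD.1 w).resolve_left hwD'
    exact Or.inr ⟨w, hwD', hpriv e he hadj ▸ hadj, hpriv⟩

theorem isMinimalDomSet_of_isIndepSet {G : SimpleGraph V} {D : Set V} (hdom : IsDomSet G D)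
    (hind : G.IsIndepSet D) : IsMinimalDomSet G D := by
  refine ⟨hdom, fun D' hD' hdom' => ?_⟩
  obtain ⟨d, hd, hd'⟩ := Set.exists_of_ssubset hD'
  obtain ⟨e, he, hadj⟩ := (hdom' d).resolve_left hd'
  exact hind hd (hD'.subset he) (G.ne_of_adj hadj) hadj

section Fibres

variable {α β : Type*} {G : SimpleGraph V} {p : V → α} {q : V → β} {D : Set V}

theorem isMinimalDomSet_setOf_eq (hG : ∀ x y, G.Adj x y ↔ p x ≠ p y ∧ q x ≠ q y) (a : α)
    (hcov : ∀ x, p x ≠ a → ∃ y, p y = a ∧ q y ≠ q x) :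
    IsMinimalDomSet G {x | p x = a} := by
  refine isMinimalDomSet_of_isIndepSet (fun x => ?_) fun x hx y hy _ hadj => ?_
  · by_cases hx : p x = a
    · exact Or.inl hx
    · obtain ⟨y, hy, hyx⟩ := hcov x hx
      exact Or.inr ⟨y, hy, (hG x y).2 ⟨hy ▸ hx, hyx.symm⟩⟩
  · exact ((hG x y).1 hadj).1 (hx.trans hy.symm)

theorem ncard_le_ncard_setOf_of_isExtPrivateNeighbor [Finite V]
    (hG : ∀ x y, G.Adj x y ↔ p x ≠ p y ∧ q x ≠ q y) {s c w : V} (hsD : s ∈ D)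
    (hs : ∀ d ∈ D, ¬ G.Adj s d) (hcD : c ∈ D) (hpc : p c = p s) (hqc : q c ≠ q s)
    (hw : IsExtPrivateNeighbor G D c w) :
    D.ncard ≤ {x | q x = q s}.ncard := by
  obtain ⟨hwD, hwc, hpriv⟩ := hw
  have hpw : p w ≠ p s := hpc ▸ ((hG w c).1 hwc).1
  have hws : ¬ G.Adj w s := fun h => hqc (congrArg q (hpriv s hsD h)).symm
  have hqw : q w = q s := by
    rw [hG, not_and_or, not_not, not_not] at hws
    exact hws.resolve_left hpw
  have hrow : ∀ d ∈ D, d ≠ c → q d = q s := by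
    intro d hd hdc
    have hsd := hs d hd
    have hwd : ¬ G.Adj w d := fun h => hdc (hpriv d hd h)
    rw [hG, not_and_or, not_not, not_not] at hsd hwd
    rcases hsd with h | h
    · exact hqw ▸ (hwd.resolve_left (h ▸ hpw)).symm
    · exact h.symm
  calc D.ncard = (insert w (D \ {c})).ncard := (Set.ncard_exchange hwD hcD).symm
    _ ≤ {x | q x = q s}.ncard := Set.ncard_le_ncard
        (Set.insert_subset hqw fun d ⟨hd, hdc⟩ => hrow d hd hdc) (Set.toFinite _)

theorem IsMinimalDomSet.ncard_le_of_isolated [Finite V]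
    (hG : ∀ x y, G.Adj x y ↔ p x ≠ p y ∧ q x ≠ q y) (hD : IsMinimalDomSet G D) {s : V}
    (hsD : s ∈ D) (hs : ∀ d ∈ D, ¬ G.Adj s d) :
    D.ncard ≤ {x | p x = p s}.ncard ∨ D.ncard ≤ {x | q x = q s}.ncard := by
  by_cases hcol : D ⊆ {x | p x = p s}
  · exact Or.inl (Set.ncard_le_ncard hcol (Set.toFinite _))
  by_cases hrow : D ⊆ {x | q x = q s}
  · exact Or.inr (Set.ncard_le_ncard hrow (Set.toFinite _))
  obtain ⟨r, hrD, hpr⟩ := Set.not_subset.1 hcol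
  obtain ⟨c, hcD, hqc⟩ := Set.not_subset.1 hrow
  have hsr := hs r hrD
  have hsc := hs c hcD
  rw [hG, not_and_or, not_not, not_not] at hsr hsc
  have hqr : q r = q s := (hsr.resolve_left (Ne.symm hpr)).symm
  have hpc : p c = p s := (hsc.resolve_right (Ne.symm hqc)).symm
  have hcr : G.Adj c r := (hG c r).2 ⟨hpc ▸ Ne.symm hpr, hqr ▸ hqc⟩
  obtain ⟨w, hw⟩ := (hD.isolated_or_exists_isExtPrivateNeighbor hcD).resolve_left
    fun h => h r hrD hcr
  exact Or.inr (ncard_le_ncard_setOf_of_isExtPrivateNeighbor hG hsD hs hcD hpc hqc hw)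

theorem ncard_le_of_forall_isExtPrivateNeighbor [Finite V]
    (hG : ∀ x y, G.Adj x y ↔ p x ≠ p y ∧ q x ≠ q y) {w : V → V}
    (hw : ∀ d ∈ D, IsExtPrivateNeighbor G D d (w d)) :
    (∃ v, D.ncard ≤ {x | p x = p v}.ncard) ∨ D.ncard ≤ (Set.range p).ncard := by
  by_cases hinj : Set.InjOn (p ∘ w) D
  · refine Or.inr ?_
    calc D.ncard = ((p ∘ w) '' D).ncard := hinj.ncard_image.symm
      _ ≤ (Set.range p).ncard :=
          Set.ncard_le_ncard
            (Set.image_subset_range _ _ |>.trans (Set.range_comp_subset_range _ _))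
            (Set.toFinite _)
  obtain ⟨d₁, hd₁, d₂, hd₂, hp, hne⟩ : ∃ d₁ ∈ D, ∃ d₂ ∈ D, p (w d₁) = p (w d₂) ∧ d₁ ≠ d₂ := by
    simpa [Set.InjOn] using hinj
  obtain ⟨hw₁D, -, hpriv₁⟩ := hw d₁ hd₁
  obtain ⟨hw₂D, hw₂, hpriv₂⟩ := hw d₂ hd₂
  -- equal rows would make `w d₁` and `w d₂` twins, so `d₂` would be adjacent to `w d₁`
  have hq : q (w d₁) ≠ q (w d₂) := fun hq =>
    hne (hpriv₁ d₂ hd₂ ((hG _ _).2 (hp ▸ hq ▸ (hG _ _).1 hw₂))).symm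
  have hcol : ∀ d ∈ D, d ≠ d₁ → d ≠ d₂ → p d = p (w d₁) := by
    intro d hd h₁ h₂
    have n₁ : ¬ G.Adj (w d₁) d := fun h => h₁ (hpriv₁ d hd h)
    have n₂ : ¬ G.Adj (w d₂) d := fun h => h₂ (hpriv₂ d hd h)
    rw [hG, not_and_or, not_not, not_not] at n₁ n₂
    rcases n₁ with h | h
    · exact h.symm
    · exact hp ▸ (n₂.resolve_right fun h' => hq (h.trans h'.symm)).symm
  have hw₁ : w d₁ ∉ insert (w d₂) (D \ {d₂}) := by
    rintro (h | ⟨h, -⟩)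
    exacts [hq (congrArg q h), hw₁D h]
  refine Or.inl ⟨w d₁, ?_⟩
  calc D.ncard = (insert (w d₂) (D \ {d₂})).ncard := (Set.ncard_exchange hw₂D hd₂).symm
    _ = (insert (w d₁) (insert (w d₂) (D \ {d₂}) \ {d₁})).ncard :=
        (Set.ncard_exchange hw₁ (Or.inr ⟨hd₁, hne⟩)).symm
    _ ≤ {x | p x = p (w d₁)}.ncard := by
        refine Set.ncard_le_ncard ?_ (Set.toFinite _)
        rintro x (rfl | ⟨rfl | ⟨hxD, hx₂⟩, hx₁⟩)
        exacts [rfl, hp.symm, hcol x hxD hx₁ hx₂]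

theorem IsMinimalDomSet.ncard_le_of_adj_iff [Finite V]
    (hG : ∀ x y, G.Adj x y ↔ p x ≠ p y ∧ q x ≠ q y) (hD : IsMinimalDomSet G D) :
    (∃ v, D.ncard ≤ {x | p x = p v}.ncard) ∨ (∃ v, D.ncard ≤ {x | q x = q v}.ncard) ∨
      D.ncard ≤ (Set.range p).ncard := by
  by_cases hI : ∃ s ∈ D, ∀ d ∈ D, ¬ G.Adj s d
  · obtain ⟨s, hsD, hs⟩ := hI
    rcases hD.ncard_le_of_isolated hG hsD hs with h | h
    exacts [Or.inl ⟨s, h⟩, Or.inr (Or.inl ⟨s, h⟩)]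
  · push Not at hI
    have hpriv : ∀ d ∈ D, ∃ w, IsExtPrivateNeighbor G D d w := fun d hd =>
      (hD.isolated_or_exists_isExtPrivateNeighbor hd).resolve_left fun h =>
        let ⟨d', hd', hadj⟩ := hI d hd
        h d' hd' hadj
    choose! w hw using hpriv
    rcases ncard_le_of_forall_isExtPrivateNeighbor hG hw with h | h
    exacts [Or.inl h, Or.inr (Or.inr h)]

end Fibres

theorem ZMod.ncard_setOf_val_mod_eq {m k c : ℕ} [NeZero (m * k)] (hc : c < k) :
    {z : ZMod (m * k) | z.val % k = c}.ncard = m := by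
  have hk : 0 < k := by omega
  have himage : ZMod.val '' {z : ZMod (m * k) | z.val % k = c} =
      ↑((Finset.range (m * k)).filter (· ≡ c [MOD k])) := by
    ext i
    simp only [Set.mem_image, Set.mem_ofPred_eq, Finset.coe_filter, Finset.mem_range, Nat.ModEq,
      Nat.mod_eq_of_lt hc]
    constructor
    · rintro ⟨z, hz, rfl⟩
      exact ⟨z.val_lt, hz⟩
    · rintro ⟨hi, hic⟩
      exact ⟨i, by rwa [ZMod.val_cast_of_lt hi], ZMod.val_cast_of_lt hi⟩
  rw [← Set.ncard_image_of_injective _ (ZMod.val_injective _), himage, Set.ncard_coe_finset,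
    ← Nat.count_eq_card_filter_range, Nat.count_modEq_card _ hk]
  simp [Nat.mul_div_cancel _ hk]

theorem Set.ncard_setOf_fin_two {α : Fin 2 → Type*} (s : Set (α 0)) (t : Set (α 1)) :
    {x : ∀ i, α i | x 0 ∈ s ∧ x 1 ∈ t}.ncard = s.ncard * t.ncard := by
  rw [← Set.ncard_prod]
  exact Set.ncard_preimage_of_injective_subset_range (f := piFinTwoEquiv α) (s := s ×ˢ t)
    (piFinTwoEquiv α).injective ((piFinTwoEquiv α).range_eq_univ ▸ Set.subset_univ _)

theorem ZMod.exists_val_mod_eq {m k c : ℕ} (hm : 0 < m) (hc : c < k) :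
    ∃ z : ZMod (m * k), z.val % k = c := by
  have hck : c < m * k := hc.trans_le (Nat.le_mul_of_pos_left k hm)
  have : NeZero (m * k) := ⟨by omega⟩
  exact ⟨c, by rw [ZMod.val_cast_of_lt hck, Nat.mod_eq_of_lt hc]⟩

section FinTwo

variable {a b : Fin 2 → ℕ} [∀ i, NeZero (a i * b i)] {c : ℕ}

theorem ncard_setOf_apply_zero_val_mod_eq (hc : c < b 0) :
    {x : ∀ i, ZMod (a i * b i) | (x 0).val % b 0 = c}.ncard = a 0 * a 1 * b 1 := by
  simpa [ZMod.ncard_setOf_val_mod_eq hc, mul_assoc] using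
    Set.ncard_setOf_fin_two (α := fun i => ZMod (a i * b i))
      {z : ZMod (a 0 * b 0) | z.val % b 0 = c} Set.univ

theorem ncard_setOf_apply_one_val_mod_eq (hc : c < b 1) :
    {x : ∀ i, ZMod (a i * b i) | (x 1).val % b 1 = c}.ncard = a 0 * a 1 * b 0 := by
  simpa [ZMod.ncard_setOf_val_mod_eq hc, mul_right_comm] using
    Set.ncard_setOf_fin_two (α := fun i => ZMod (a i * b i))
      Set.univ {z : ZMod (a 1 * b 1) | z.val % b 1 = c}

end FinTwo

theorem multipartiteProd_two_adj_iff (a b : Fin 2 → ℕ) (x y : ∀ i, ZMod (a i * b i)) :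
    (multipartiteProd 2 a b).Adj x y ↔
      (x 0).val % b 0 ≠ (y 0).val % b 0 ∧ (x 1).val % b 1 ≠ (y 1).val % b 1 := by
  refine ⟨fun h => ⟨h.2 0, h.2 1⟩, fun ⟨h₀, h₁⟩ => ⟨fun he => h₀ (by rw [he]), ?_⟩⟩
  exact Fin.forall_fin_two.2 ⟨h₀, h₁⟩

theorem stmt19 (a b : Fin 2 → ℕ) (ha : ∀ i, 0 < a i) (hb0 : 2 ≤ b 0)
    (hb : b 0 ≤ b 1) :
    upperDomNum (multipartiteProd 2 a b) = a 0 * a 1 * b 1 := by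
  have : ∀ i, NeZero (a i * b i) :=
    Fin.forall_fin_two.2 ⟨⟨Nat.mul_ne_zero (ha 0).ne' (by omega)⟩,
      ⟨Nat.mul_ne_zero (ha 1).ne' (by omega)⟩⟩
  have hadj := multipartiteProd_two_adj_iff a b
  refine IsGreatest.csSup_eq ⟨⟨_, isMinimalDomSet_setOf_eq hadj 0 fun x _ => ?_,
    ncard_setOf_apply_zero_val_mod_eq (by omega)⟩, ?_⟩
  · obtain ⟨z, hz⟩ := ZMod.exists_val_mod_eq (ha 1)
      (k := b 1) (c := if (x 1).val % b 1 = 0 then 1 else 0) (by split_ifs <;> omega)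
    refine ⟨(piFinTwoEquiv _).symm (0, z), by simp, ?_⟩
    simp only [piFinTwoEquiv_symm_apply, Fin.cons_zero, Fin.cons_one, hz]
    split_ifs <;> omega
  · rintro _ ⟨D, hD, rfl⟩
    rcases hD.ncard_le_of_adj_iff hadj with ⟨v, h⟩ | ⟨v, h⟩ | h
    · exact h.trans (ncard_setOf_apply_zero_val_mod_eq (Nat.mod_lt _ (by omega))).le
    · rw [ncard_setOf_apply_one_val_mod_eq (Nat.mod_lt _ (by omega))] at h
      exact h.trans (Nat.mul_le_mul_left _ hb)
    · calc D.ncard ≤ _ := h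
        _ ≤ (Set.Iio (b 0)).ncard := Set.ncard_le_ncard
            (Set.range_subset_iff.2 fun x => Nat.mod_lt _ (by omega)) (Set.finite_Iio _)
        _ = b 0 := Set.ncard_Iio_nat _
        _ ≤ a 0 * a 1 * b 1 := hb.trans (Nat.le_mul_of_pos_left _ (Nat.mul_pos (ha 0) (ha 1)))
end
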